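/- For j∈ℕ let m(j)=⌊φj⌋−j+1, and define f(n)=b(n), g(n)=b(n)−1, h(n)=2a(n)+n for n∈ℕ. Then for every k∈ℕ: (i) m(f(a(k))) = b(k); (ii) m(f(b(k))) + 1 = b(a(k)+1); (iii) m(g(a(k))) + 1 = b(k); (iv) m(g(b(k))) + 2 = b(a(k)+1); (v) m(h(a(k))) + 3 = b(a(k)+1); (vi) m(h(b(k))) + 2 = b(b(k)+1). -/

import Mathlib

/-- The golden ratio φ = (1 + √5)/2. -/
noncomputable def phi : ℝ := (1 + Real.sqrt 5) / 2

/-- The lower Wythoff sequence a(n) = ⌊nφ⌋. -/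
noncomputable def wa (n : ℕ) : ℕ := ⌊(n : ℝ) * phi⌋₊

/-- The upper Wythoff sequence b(n) = ⌊nφ²⌋. -/
noncomputable def wb (n : ℕ) : ℕ := ⌊(n : ℝ) * phi ^ 2⌋₊

/-- m(j) = ⌊φj⌋ − j + 1. -/
noncomputable def mfun (j : ℕ) : ℤ := (wa j : ℤ) - (j : ℤ) + 1

/-- f(n) = b(n). -/
noncomputable def f (n : ℕ) : ℕ := wb n

/-- g(n) = b(n) − 1. -/
noncomputable def g (n : ℕ) : ℕ := wb n - 1

/-- h(n) = 2a(n) + n. -/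
noncomputable def h (n : ℕ) : ℕ := 2 * wa n + n

/-! With θ = nφ − a(n) ∈ [0, 1), the relation φ² = φ + 1 gives b(n) = a(n) + n and
a(n)φ = a(n) + n − θ(φ − 1). Hence ⌊·φ⌋ can be evaluated exactly at a(n), a(n) + 1, b(n) − 1,
b(n) and b(n) + 1; only a(a(n)) = b(n) − 1 needs θ ≠ 0, i.e. the irrationality of φ and n > 0.
This gives m(a(n)) = n, m(b(n)) = a(n) + 1, m(b(n) − 1) = a(n) and h(n) = a(b(n)), from which
the six identities follow by linear arithmetic. -/

lemma phi_sq : phi ^ 2 = phi + 1 := Real.goldenRatio_sq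

lemma one_lt_phi : 1 < phi := Real.one_lt_goldenRatio

lemma phi_lt_two : phi < 2 := Real.goldenRatio_lt_two

lemma phi_pos : 0 < phi := Real.goldenRatio_pos

lemma wa_eq_iff {m x : ℕ} : wa m = x ↔ (x : ℝ) ≤ m * phi ∧ m * phi < x + 1 :=
  Nat.floor_eq_iff (mul_nonneg m.cast_nonneg phi_pos.le)

lemma wa_le (n : ℕ) : (wa n : ℝ) ≤ n * phi :=
  Nat.floor_le (mul_nonneg n.cast_nonneg phi_pos.le)

lemma lt_wa_add_one (n : ℕ) : (n : ℝ) * phi < wa n + 1 :=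
  Nat.lt_floor_add_one _

lemma wa_lt {n : ℕ} (hn : 0 < n) : (wa n : ℝ) < n * phi :=
  (wa_le n).lt_of_ne fun h ↦
    (Real.goldenRatio_irrational.natCast_mul hn.ne').ne_nat (wa n) h.symm

lemma wa_pos {n : ℕ} (hn : 0 < n) : 0 < wa n :=
  Nat.floor_pos.mpr (one_le_mul_of_one_le_of_one_le (Nat.one_le_cast.mpr hn) one_lt_phi.le)

lemma wb_eq_wa_add (n : ℕ) : wb n = wa n + n := by
  rw [wb, phi_sq, mul_add, mul_one,
    Nat.floor_add_natCast (mul_nonneg n.cast_nonneg phi_pos.le)]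
  rfl

lemma wb_pos {n : ℕ} (hn : 0 < n) : 0 < wb n := by
  rw [wb_eq_wa_add]
  omega

lemma wa_mul_phi (n : ℕ) :
    (wa n : ℝ) * phi = wa n + n - (n * phi - wa n) * (phi - 1) := by
  linear_combination (n : ℝ) * phi_sq

lemma wa_wa_eq_wb_sub_one {n : ℕ} (hn : 0 < n) : wa (wa n) = wb n - 1 := by
  have : wa (wa n) = wa n + n - 1 := by
    rw [wa_eq_iff, Nat.cast_sub (by omega)]
    push_cast
    constructor <;> nlinarith [wa_lt hn, lt_wa_add_one n, wa_mul_phi n, one_lt_phi, phi_lt_two]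
  rw [wb_eq_wa_add]
  omega

lemma wa_wa_add_one (n : ℕ) : wa (wa n + 1) = wb n + 1 := by
  rw [wb_eq_wa_add, wa_eq_iff]
  push_cast
  constructor <;> nlinarith [wa_le n, lt_wa_add_one n, wa_mul_phi n, one_lt_phi, phi_lt_two]

lemma wa_wb (n : ℕ) : wa (wb n) = wa n + wb n := by
  rw [wb_eq_wa_add, wa_eq_iff]
  push_cast
  constructor <;> nlinarith [wa_le n, lt_wa_add_one n, wa_mul_phi n, one_lt_phi, phi_lt_two]

lemma wa_wb_add_one (n : ℕ) : wa (wb n + 1) = wa (wb n) + 1 := by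
  rw [wa_wb, wb_eq_wa_add, wa_eq_iff]
  push_cast
  constructor <;> nlinarith [wa_le n, lt_wa_add_one n, wa_mul_phi n, one_lt_phi, phi_lt_two]

lemma wa_wb_sub_one {n : ℕ} (hn : 0 < n) : wa (wb n - 1) + 2 = wa (wb n) := by
  have := wa_pos hn
  have : wa (wa n + n - 1) = 2 * wa n + n - 2 := by
    rw [wa_eq_iff, Nat.cast_sub (by omega), Nat.cast_sub (by omega)]
    push_cast
    constructor <;> nlinarith [wa_le n, lt_wa_add_one n, wa_mul_phi n, one_lt_phi, phi_lt_two]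
  rw [wa_wb, wb_eq_wa_add]
  omega

lemma wb_wa_add_one (n : ℕ) : wb (wa n + 1) = wb n + wa n + 2 := by
  rw [wb_eq_wa_add (wa n + 1), wa_wa_add_one]
  ring

lemma wb_wb_add_one (n : ℕ) : wb (wb n + 1) = wb (wb n) + 2 := by
  rw [wb_eq_wa_add (wb n + 1), wa_wb_add_one, wb_eq_wa_add (wb n)]
  ring

lemma h_eq_wa_wb (n : ℕ) : h n = wa (wb n) := by
  rw [h, wa_wb, wb_eq_wa_add]
  ring

lemma mfun_wa {n : ℕ} (hn : 0 < n) : mfun (wa n) = n := by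
  have := wa_wa_eq_wb_sub_one hn
  rw [wb_eq_wa_add] at this
  rw [mfun]
  omega

lemma mfun_wb (n : ℕ) : mfun (wb n) = wa n + 1 := by
  rw [mfun, wa_wb]
  push_cast
  ring

lemma mfun_wb_sub_one {n : ℕ} (hn : 0 < n) : mfun (wb n - 1) = wa n := by
  have key := wa_wb_sub_one hn
  rw [wa_wb] at key
  have := wb_pos hn
  rw [mfun]
  omega

lemma mfun_h {n : ℕ} (hn : 0 < n) : mfun (h n) = wb n := by
  rw [h_eq_wa_wb, mfun_wa (wb_pos hn)]

theorem stmt_18 (k : ℕ) (hk : 0 < k) :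
    mfun (f (wa k)) = (wb k : ℤ) ∧
    mfun (f (wb k)) + 1 = (wb (wa k + 1) : ℤ) ∧
    mfun (g (wa k)) + 1 = (wb k : ℤ) ∧
    mfun (g (wb k)) + 2 = (wb (wa k + 1) : ℤ) ∧
    mfun (h (wa k)) + 3 = (wb (wa k + 1) : ℤ) ∧
    mfun (h (wb k)) + 2 = (wb (wb k + 1) : ℤ) := by
  have ha := wa_pos hk
  have hb := wb_pos hk
  have hwaa := wa_wa_eq_wb_sub_one hk
  have hwba := wb_eq_wa_add (wa k)
  simp only [f, g, mfun_wb, mfun_wb_sub_one ha, mfun_wb_sub_one hb, mfun_h ha, mfun_h hb,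
    wb_wa_add_one, wb_wb_add_one, wa_wb]
  omega
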